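/- arXiv:2302.09383 — 2 statements merged into one kernel-verified Lean document; each statement's English description precedes it below -/
import Mathlib

section
/- Let ν ≥ 2 and let Ψ_NN be the set of all nearest-neighbour coverings of Γ_{2ν}, i.e., coverings ψ with ψ(2t−1) ∈ {2(t−1), 2t, 2(t+1)} ∩ B for every 1 ≤ t ≤ ν. Then the RVB polynomial F_{Ψ_NN} = Σ_{ψ∈Ψ_NN} F_ψ splits across no nontrivial bipartition of Γ_{2ν}; i.e., the nearest-neighbour RVB state on the ladder is genuinely multipartite entangled. (In particular, there is no nonempty proper E ⊆ Γ_{2ν} with ψ(E∩A) = E∩B for all ψ ∈ Ψ_NN.) -/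
/-!
Call `(B q, A q')` with `q ⋖ q'` a *bond* and `(A t, B t)` a *rung*; consecutive sites of
`Γ_{2ν}` are joined by one or the other. A nearest-neighbour covering `σ ≠ 1` has a descent
`σ t ⋖ t`, and its factor `X_{B (σ t)} - X_{A t}` vanishes at points constant along that bond.
Hence at points constant along all bonds only the identity term of `F = F_{Ψ_NN}` survives,
and when one bond `(B r, A r')` is left free, only the identity and `swap r r'` survive.

If `F = p q` splits across `(E, E')`, then `F x * F y = F (x_E y_E') * F (y_E x_E')`.
A nontrivial `E` separates two consecutive sites. If it splits a bond, varying its two sites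
away from the staircase `A t ↦ t, B t ↦ t + 1` gives `(s - r) (r + 2 - u) + 2 (s - u)`, which
is not a product `a(s) b(u)`. If it splits no bond but a rung `t`, mixing the staircase with
the staircase whose values `t`, `t + 1` are exchanged gives a point with equal values on that
rung, where `F` vanishes, although `F` is nonzero at both staircases. Decomposability fails for the same reason: the identity and the
adjacent transpositions force every rung and every bond to lie on one side of the cut.
-/

open MvPolynomial Finset

noncomputable section

/-- The odd-labelled site `2t−1` of the paper (`t`-th site of sublattice `A`),
zero-indexed as `2t` in `Fin (2ν)`. -/
def siteA (ν : ℕ) (t : Fin ν) : Fin (2 * ν) := ⟨2 * t.val, by have := t.isLt; omega⟩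

/-- The even-labelled site `2t` of the paper (`t`-th site of sublattice `B`),
zero-indexed as `2t+1` in `Fin (2ν)`. -/
def siteB (ν : ℕ) (t : Fin ν) : Fin (2 * ν) := ⟨2 * t.val + 1, by have := t.isLt; omega⟩

/-- A covering is a bijection `ψ : A → B`; it is encoded by the permutation
`σ` of `Fin ν` with `ψ(siteA t) = siteB (σ t)`.  Its covering polynomial is
`F_ψ = ∏_{a∈A} (X_{ψ(a)} − X_a)`. -/
def covPoly (ν : ℕ) (σ : Equiv.Perm (Fin ν)) : MvPolynomial (Fin (2 * ν)) ℂ :=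
  ∏ t : Fin ν, (X (siteB ν (σ t)) - X (siteA ν t))

/-- `F` splits across the bipartition `(E, Eᶜ)`. -/
def SplitsAcross {n : ℕ} (F : MvPolynomial (Fin n) ℂ) (E : Finset (Fin n)) : Prop :=
  ∃ p q : MvPolynomial (Fin n) ℂ, F = p * q ∧ p.vars ⊆ E ∧ q.vars ⊆ Eᶜ

/-- `ψ(E ∩ A) = E ∩ B` for the covering `ψ` encoded by `σ`
(here `E ∩ B` is the set of odd-indexed, i.e. `B`-sublattice, elements of `E`). -/
def MapsCut (ν : ℕ) (σ : Equiv.Perm (Fin ν)) (E : Finset (Fin (2 * ν))) : Prop :=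
  ((Finset.univ.filter (fun t => siteA ν t ∈ E)).image fun t => siteB ν (σ t))
    = E.filter (fun x => x.val % 2 = 1)

/-- The (unnormalized) RVB polynomial `F_Ψ = Σ_{ψ∈Ψ} F_ψ`. -/
def rvbPoly (ν : ℕ) (Ψ : Finset (Equiv.Perm (Fin ν))) : MvPolynomial (Fin (2 * ν)) ℂ :=
  ∑ σ ∈ Ψ, covPoly ν σ

/-- The set of nearest-neighbour coverings: those whose induced permutation `σ`
of `{1,…,ν}` satisfies `|σ(t) − t| ≤ 1` for all `t`. -/
def nnCoverings (ν : ℕ) : Finset (Equiv.Perm (Fin ν)) :=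
  Finset.univ.filter (fun σ => ∀ t : Fin ν, (((σ t).val : ℤ) - (t.val : ℤ)).natAbs ≤ 1)

theorem iff_of_forall_covBy {α : Type*} [LinearOrder α] [LocallyFiniteOrder α] {P : α → Prop}
    (h : ∀ a b, a ⋖ b → (P a ↔ P b)) (a b : α) : P a ↔ P b := by
  have hmono : Monotone P := (monotone_iff_forall_covBy P).2 fun a b hab => (h a b hab).1
  have hanti : Antitone P := (antitone_iff_forall_covBy P).2 fun a b hab => (h a b hab).2
  rcases le_total a b with hab | hab
  exacts [⟨hmono hab, hanti hab⟩, ⟨hanti hab, hmono hab⟩]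

theorem Finset.exists_covBy_not_mem_iff_mem {α : Type*} [LinearOrder α] [LocallyFiniteOrder α]
    [Fintype α] {E : Finset α} (hne : E.Nonempty) (hnu : E ≠ univ) :
    ∃ k k', k ⋖ k' ∧ ¬(k ∈ E ↔ k' ∈ E) := by
  by_contra! h
  obtain ⟨k, hk⟩ := hne
  exact hnu (eq_univ_of_forall fun k' => (iff_of_forall_covBy h k k').1 hk)

theorem Equiv.Perm.eq_one_of_forall_le_apply {α : Type*} [LinearOrder α] [Fintype α]
    {σ : Equiv.Perm α} (h : ∀ a, a ≤ σ a) : σ = 1 := by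
  by_contra hσ
  have hmoved : (univ.filter fun a => σ a ≠ a).Nonempty := by
    obtain ⟨a, ha⟩ := not_forall.1 fun h' => hσ (Equiv.ext h')
    exact ⟨a, by simpa using ha⟩
  obtain ⟨a, ha, hmax⟩ := (univ.filter fun a => σ a ≠ a).exists_max_image id hmoved
  have ha : a < σ a := lt_of_le_of_ne (h a) (Ne.symm (mem_filter.1 ha).2)
  -- `σ a` lies above the largest moved point, so it is fixed, forcing `σ a = a`.
  have hfix : σ (σ a) = σ a := by
    by_contra hne
    exact ha.not_ge (hmax (σ a) (by simpa using hne))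
  exact ha.ne (σ.injective hfix).symm

theorem Equiv.Perm.eq_swap_of_forall_le_apply {α : Type*} [LinearOrder α] [Fintype α]
    [DecidableEq α] {σ : Equiv.Perm α} {r r' : α} (hr : r ⋖ r') (hσ : σ r' = r)
    (h : ∀ a, a ≠ r' → a ≤ σ a) : σ = Equiv.swap r r' := by
  have hone : σ * Equiv.swap r r' = 1 := by
    refine Equiv.Perm.eq_one_of_forall_le_apply fun a => ?_
    rw [Equiv.Perm.mul_apply]
    rcases eq_or_ne a r with rfl | har
    · rw [Equiv.swap_apply_left, hσ]
    rcases eq_or_ne a r' with rfl | har'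
    · rw [Equiv.swap_apply_right]
      have hne : σ r ≠ r := fun h' => hr.ne (σ.injective (h'.trans hσ.symm))
      exact hr.ge_of_gt (lt_of_le_of_ne (h r hr.ne) hne.symm)
    · rw [Equiv.swap_apply_of_ne_of_ne har har']
      exact h a har'
  rw [← Equiv.swap_inv]
  exact eq_inv_of_mul_eq_one_left hone

theorem MvPolynomial.eval_congr_vars {σ R : Type*} [CommSemiring R] {f : MvPolynomial σ R}
    {x y : σ → R} (h : ∀ i ∈ f.vars, x i = y i) : eval x f = eval y f :=
  eval₂Hom_congr' rfl (fun i hi _ => h i hi) rfl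

namespace SplitsAcross

variable {n : ℕ} {F : MvPolynomial (Fin n) ℂ} {E : Finset (Fin n)}

theorem eval_mul_eval (h : SplitsAcross F E) (x y : Fin n → ℂ) :
    eval x F * eval y F = eval (E.piecewise x y) F * eval (E.piecewise y x) F := by
  obtain ⟨p, q, rfl, hp, hq⟩ := h
  have hpE : ∀ x' y' : Fin n → ℂ, eval (E.piecewise x' y') p = eval x' p := fun x' y' =>
    eval_congr_vars fun i hi => E.piecewise_eq_of_mem _ _ (hp hi)
  have hqE : ∀ x' y' : Fin n → ℂ, eval (E.piecewise x' y') q = eval y' q := fun x' y' =>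
    eval_congr_vars fun i hi => E.piecewise_eq_of_notMem _ _ (mem_compl.1 (hq hi))
  simp only [map_mul, hpE, hqE]
  ring

theorem eval_update_mul_eval_update (h : SplitsAcross F E) {i j : Fin n}
    (hij : ¬(i ∈ E ↔ j ∈ E)) (x : Fin n → ℂ) (a a' b b' : ℂ) :
    eval (Function.update (Function.update x i a) j b) F *
        eval (Function.update (Function.update x i a') j b') F =
      eval (Function.update (Function.update x i a) j b') F *
        eval (Function.update (Function.update x i a') j b) F := by
  have hmix : ∀ a a' b b' : ℂ,
      E.piecewise (Function.update (Function.update x i a) j b)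
        (Function.update (Function.update x i a') j b') =
      Function.update (Function.update x i (if i ∈ E then a else a')) j
        (if j ∈ E then b else b') := by
    intro a a' b b'
    ext k
    by_cases hk : k ∈ E <;> simp [Finset.piecewise, Function.update, hk] <;> grind
  rw [h.eval_mul_eval, hmix, hmix]
  by_cases hi : i ∈ E
  · simp [hi, show j ∉ E by tauto]
  · simp [hi, show j ∈ E by tauto, mul_comm]

end SplitsAcross

section

variable {ν : ℕ}

@[simp]
theorem siteA_inj {t t' : Fin ν} : siteA ν t = siteA ν t' ↔ t = t' := by
  simp [siteA, Fin.ext_iff]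

@[simp]
theorem siteB_inj {t t' : Fin ν} : siteB ν t = siteB ν t' ↔ t = t' := by
  simp [siteB, Fin.ext_iff]

@[simp]
theorem siteA_ne_siteB (t t' : Fin ν) : siteA ν t ≠ siteB ν t' := by
  simp only [siteA, siteB, ne_eq, Fin.ext_iff]
  omega

@[simp]
theorem siteB_ne_siteA (t t' : Fin ν) : siteB ν t ≠ siteA ν t' :=
  (siteA_ne_siteB t' t).symm

theorem Fin.val_add_one_of_covBy {m : ℕ} {a b : Fin m} (h : a ⋖ b) : a.val + 1 = b.val :=
  Nat.covBy_iff_add_one_eq.1 (Fin.covBy_iff.1 h)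

theorem covBy_site_cases {k k' : Fin (2 * ν)} (h : k ⋖ k') :
    (∃ t, k = siteA ν t ∧ k' = siteB ν t) ∨
      ∃ q q', q ⋖ q' ∧ k = siteB ν q ∧ k' = siteA ν q' := by
  have hkk' := Fin.val_add_one_of_covBy h
  have hk' := k'.isLt
  rcases Nat.even_or_odd' k.val with ⟨t, ht | ht⟩
  · exact Or.inl ⟨⟨t, by omega⟩, Fin.ext (by simp [siteA, ht]), Fin.ext (by simp [siteB]; omega)⟩
  · refine Or.inr ⟨⟨t, by omega⟩, ⟨t + 1, by omega⟩, ?_, Fin.ext (by simp [siteB, ht]),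
      Fin.ext (by simp [siteA]; omega)⟩
    exact Fin.covBy_iff.2 (Nat.covBy_iff_add_one_eq.2 rfl)

theorem mem_nnCoverings {σ : Equiv.Perm (Fin ν)} :
    σ ∈ nnCoverings ν ↔ ∀ t : Fin ν, (((σ t).val : ℤ) - (t.val : ℤ)).natAbs ≤ 1 := by
  simp [nnCoverings]

theorem one_mem_nnCoverings : (1 : Equiv.Perm (Fin ν)) ∈ nnCoverings ν :=
  mem_nnCoverings.2 fun t => by simp

theorem swap_mem_nnCoverings {r r' : Fin ν} (hr : r ⋖ r') :
    Equiv.swap r r' ∈ nnCoverings ν := by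
  have := Fin.val_add_one_of_covBy hr
  refine mem_nnCoverings.2 fun t => ?_
  rcases eq_or_ne t r with rfl | htr
  · rw [Equiv.swap_apply_left]; omega
  rcases eq_or_ne t r' with rfl | htr'
  · rw [Equiv.swap_apply_right]; omega
  · rw [Equiv.swap_apply_of_ne_of_ne htr htr']; simp

theorem covBy_of_mem_nnCoverings {σ : Equiv.Perm (Fin ν)} (hσ : σ ∈ nnCoverings ν) {t : Fin ν}
    (ht : σ t < t) : σ t ⋖ t := by
  have := mem_nnCoverings.1 hσ t
  have : (σ t).val < t.val := ht
  exact Fin.covBy_iff.2 (Nat.covBy_iff_add_one_eq.2 (by omega))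

theorem MapsCut.siteB_apply_mem_iff {σ : Equiv.Perm (Fin ν)} {E : Finset (Fin (2 * ν))}
    (h : MapsCut ν σ E) (t : Fin ν) : siteB ν (σ t) ∈ E ↔ siteA ν t ∈ E := by
  have hB : siteB ν (σ t) ∈ E ↔ siteB ν (σ t) ∈ E.filter fun x => x.val % 2 = 1 := by
    simp [siteB, Nat.add_mod]
  rw [hB, ← h]
  simp

theorem eval_covPoly (x : Fin (2 * ν) → ℂ) (σ : Equiv.Perm (Fin ν)) :
    eval x (covPoly ν σ) = ∏ t, (x (siteB ν (σ t)) - x (siteA ν t)) := by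
  simp [covPoly]

theorem eval_rvbPoly (x : Fin (2 * ν) → ℂ) (Ψ : Finset (Equiv.Perm (Fin ν))) :
    eval x (rvbPoly ν Ψ) = ∑ σ ∈ Ψ, eval x (covPoly ν σ) := by
  simp [rvbPoly]

theorem eval_covPoly_eq_zero {x : Fin (2 * ν) → ℂ} {σ : Equiv.Perm (Fin ν)} {t : Fin ν}
    (h : x (siteB ν (σ t)) = x (siteA ν t)) : eval x (covPoly ν σ) = 0 := by
  rw [eval_covPoly]
  exact prod_eq_zero (mem_univ t) (sub_eq_zero.2 h)

theorem eval_rvbPoly_nnCoverings_of_forall_covBy {x : Fin (2 * ν) → ℂ}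
    (hx : ∀ q q', q ⋖ q' → x (siteB ν q) = x (siteA ν q')) :
    eval x (rvbPoly ν (nnCoverings ν)) = ∏ t, (x (siteB ν t) - x (siteA ν t)) := by
  rw [eval_rvbPoly, sum_eq_single_of_mem 1 one_mem_nnCoverings, eval_covPoly]
  · rfl
  intro σ hσ hσ1
  obtain ⟨t, ht⟩ : ∃ t, σ t < t := by
    by_contra! h
    exact hσ1 (Equiv.Perm.eq_one_of_forall_le_apply h)
  exact eval_covPoly_eq_zero (hx _ _ (covBy_of_mem_nnCoverings hσ ht))

theorem eval_rvbPoly_nnCoverings_of_forall_covBy_ne {x : Fin (2 * ν) → ℂ} {r r' : Fin ν}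
    (hr : r ⋖ r') (hx : ∀ q q', q ⋖ q' → q ≠ r → x (siteB ν q) = x (siteA ν q')) :
    eval x (rvbPoly ν (nnCoverings ν)) =
      ∏ t, (x (siteB ν t) - x (siteA ν t)) +
        ∏ t, (x (siteB ν (Equiv.swap r r' t)) - x (siteA ν t)) := by
  have hne : (1 : Equiv.Perm (Fin ν)) ≠ Equiv.swap r r' := by
    intro h
    have := congrArg (· r) h
    simp [hr.ne] at this
  have hsub : {1, Equiv.swap r r'} ⊆ nnCoverings ν := by
    simp [insert_subset_iff, one_mem_nnCoverings, swap_mem_nnCoverings hr]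
  rw [eval_rvbPoly, ← sum_subset hsub, sum_pair hne, eval_covPoly, eval_covPoly]
  · rfl
  intro σ hσ hσS
  by_contra hσ0
  have hdesc : ∀ t, σ t < t → t = r' := by
    intro t ht
    have hcov := covBy_of_mem_nnCoverings hσ ht
    have hσt : σ t = r := by
      by_contra hσt
      exact hσ0 (eval_covPoly_eq_zero (hx _ _ hcov hσt))
    rw [hσt] at hcov
    exact hcov.unique_right hr
  by_cases hr' : σ r' < r'
  · have hσr' : σ r' = r :=
      (covBy_of_mem_nnCoverings hσ hr').unique_left hr
    have hswap : σ = Equiv.swap r r' :=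
      Equiv.Perm.eq_swap_of_forall_le_apply hr hσr' fun t ht =>
        not_lt.1 fun h => ht (hdesc t h)
    exact hσS (by simp [hswap])
  · have hone : σ = 1 := Equiv.Perm.eq_one_of_forall_le_apply fun t =>
      not_lt.1 fun h => hr' (hdesc t h ▸ h)
    exact hσS (by simp [hone])

/-- The point taking the value `c j` on the `j`-th bond `{B (j - 1), A j}` of the ladder. -/
def blockPoint (ν : ℕ) (c : ℕ → ℂ) : Fin (2 * ν) → ℂ := fun k => c ((k.val + 1) / 2)

@[simp]
theorem blockPoint_siteA (c : ℕ → ℂ) (t : Fin ν) : blockPoint ν c (siteA ν t) = c t := by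
  simp only [blockPoint, siteA]
  congr 1
  omega

@[simp]
theorem blockPoint_siteB (c : ℕ → ℂ) (t : Fin ν) : blockPoint ν c (siteB ν t) = c (t + 1) := by
  simp only [blockPoint, siteB]
  congr 1
  omega

theorem blockPoint_siteB_eq_siteA (c : ℕ → ℂ) {q q' : Fin ν} (hq : q ⋖ q') :
    blockPoint ν c (siteB ν q) = blockPoint ν c (siteA ν q') := by
  simp [Fin.val_add_one_of_covBy hq]

theorem eval_rvbPoly_nnCoverings_blockPoint_ne_zero {c : ℕ → ℂ} (hc : Function.Injective c) :
    eval (blockPoint ν c) (rvbPoly ν (nnCoverings ν)) ≠ 0 := by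
  rw [eval_rvbPoly_nnCoverings_of_forall_covBy fun q q' => blockPoint_siteB_eq_siteA c]
  exact prod_ne_zero_iff.2 fun t _ => by simpa [sub_eq_zero] using hc.ne (by omega)

theorem eval_rvbPoly_nnCoverings_update_blockPoint {r r' : Fin ν} (hr : r ⋖ r') (s u : ℂ) :
    eval (Function.update (Function.update (blockPoint ν Nat.cast) (siteB ν r) s)
        (siteA ν r') u) (rvbPoly ν (nnCoverings ν)) =
      (s - r) * (r + 2 - u) + 2 * (s - u) := by
  have hrr' := Fin.val_add_one_of_covBy hr
  rw [eval_rvbPoly_nnCoverings_of_forall_covBy_ne hr fun q q' hq hqr => ?_]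
  · rw [prod_eq_mul r r' hr.ne (fun t _ ht => ?_) (by simp) (by simp),
      prod_eq_mul r r' hr.ne (fun t _ ht => ?_) (by simp) (by simp)]
    · simp [hr.ne, hr.ne', ← hrr']
      ring
    all_goals simp [Equiv.swap_apply_of_ne_of_ne ht.1 ht.2, ht.1, ht.2]
  · have hqr' : q' ≠ r' := fun h => hqr (hq.unique_left (h ▸ hr))
    simp [hqr, hqr', blockPoint_siteB_eq_siteA _ hq]

theorem not_splitsAcross_of_bond {E : Finset (Fin (2 * ν))} {r r' : Fin ν} (hr : r ⋖ r')
    (hsplit : ¬(siteB ν r ∈ E ↔ siteA ν r' ∈ E)) :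
    ¬ SplitsAcross (rvbPoly ν (nnCoverings ν)) E := by
  intro h
  -- `F` at `B r ↦ s, A r' ↦ u` vanishes for `s = u = r` and `s = u = r + 2`, but not for
  -- `(s, u) = (r, r + 2)` or `(r + 2, r)`.
  have key := h.eval_update_mul_eval_update hsplit (blockPoint ν Nat.cast) r (r + 2) r (r + 2)
  simp only [eval_rvbPoly_nnCoverings_update_blockPoint hr] at key
  have : (32 : ℂ) = 0 := by linear_combination key
  norm_num at this

theorem not_splitsAcross_of_rung {E : Finset (Fin (2 * ν))}
    (hbond : ∀ q q', q ⋖ q' → (siteB ν q ∈ E ↔ siteA ν q' ∈ E))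
    {t : Fin ν} (hsplit : ¬(siteA ν t ∈ E ↔ siteB ν t ∈ E)) :
    ¬ SplitsAcross (rvbPoly ν (nnCoverings ν)) E := by
  intro h
  set c : ℕ → ℂ := fun j => ((Equiv.swap t.val (t.val + 1) j : ℕ) : ℂ)
  have hc : Function.Injective c := Nat.cast_injective.comp (Equiv.injective _)
  -- On the rung `t` the mixed point takes the value `t` (or `t + 1`) at both ends.
  have hzero : eval (E.piecewise (blockPoint ν Nat.cast) (blockPoint ν c))
      (rvbPoly ν (nnCoverings ν)) = 0 := by
    rw [eval_rvbPoly_nnCoverings_of_forall_covBy fun q q' hq => ?_]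
    · refine prod_eq_zero (mem_univ t) (sub_eq_zero.2 ?_)
      by_cases hA : siteA ν t ∈ E
      · simp [Finset.piecewise, hA, show siteB ν t ∉ E by tauto, c]
      · simp [Finset.piecewise, hA, show siteB ν t ∈ E by tauto, c]
    · by_cases hB : siteB ν q ∈ E
      · simp [Finset.piecewise, hB, (hbond q q' hq).1 hB, blockPoint_siteB_eq_siteA _ hq]
      · simp [Finset.piecewise, hB, mt (hbond q q' hq).2 hB, blockPoint_siteB_eq_siteA _ hq]
  have key := h.eval_mul_eval (blockPoint ν Nat.cast) (blockPoint ν c)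
  rw [hzero, zero_mul] at key
  exact mul_ne_zero (eval_rvbPoly_nnCoverings_blockPoint_ne_zero Nat.cast_injective)
    (eval_rvbPoly_nnCoverings_blockPoint_ne_zero hc) key

end

theorem stmt_8_general (ν : ℕ) :
    (∀ E : Finset (Fin (2 * ν)), E.Nonempty → E ≠ Finset.univ →
        ¬ SplitsAcross (rvbPoly ν (nnCoverings ν)) E) ∧
    (∀ E : Finset (Fin (2 * ν)), E.Nonempty → E ≠ Finset.univ →
        ¬ ∀ σ ∈ nnCoverings ν, MapsCut ν σ E) := by
  constructor
  · intro E hne hnu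
    obtain ⟨k, k', hk, hsplit⟩ := E.exists_covBy_not_mem_iff_mem hne hnu
    obtain ⟨t, rfl, rfl⟩ | ⟨q, q', hq, rfl, rfl⟩ := covBy_site_cases hk
    · by_cases hbond : ∃ q q', q ⋖ q' ∧ ¬(siteB ν q ∈ E ↔ siteA ν q' ∈ E)
      · obtain ⟨q, q', hq, hsplit'⟩ := hbond
        exact not_splitsAcross_of_bond hq hsplit'
      · exact not_splitsAcross_of_rung
          (fun q q' hq => by_contra fun h => hbond ⟨q, q', hq, h⟩) hsplit
    · exact not_splitsAcross_of_bond hq hsplit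
  · intro E hne hnu hmaps
    obtain ⟨k, k', hk, hsplit⟩ := E.exists_covBy_not_mem_iff_mem hne hnu
    obtain ⟨t, rfl, rfl⟩ | ⟨q, q', hq, rfl, rfl⟩ := covBy_site_cases hk
    · have hrung := (hmaps 1 one_mem_nnCoverings).siteB_apply_mem_iff t
      exact hsplit (by simpa using hrung.symm)
    · have hbond := (hmaps _ (swap_mem_nnCoverings hq)).siteB_apply_mem_iff q'
      exact hsplit (by simpa using hbond)

/-- Theorem 3.1(iii),(iv): the nearest-neighbour RVB polynomial
splits across no nontrivial bipartition (genuine multipartite entanglement); in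
particular no nonempty proper `E` has `ψ(E∩A) = E∩B` for all NN coverings `ψ`. -/
theorem stmt_8 (ν : ℕ) (hν : 2 ≤ ν) :
    (∀ E : Finset (Fin (2 * ν)), E.Nonempty → E ≠ Finset.univ →
        ¬ SplitsAcross (rvbPoly ν (nnCoverings ν)) E) ∧
    (∀ E : Finset (Fin (2 * ν)), E.Nonempty → E ≠ Finset.univ →
        ¬ ∀ σ ∈ nnCoverings ν, MapsCut ν σ E) :=
  stmt_8_general ν
end
end

section
/- Let ν ≥ 3 and let Ψ be a set of coverings with #Ψ ≥ 2. Let 𝒜₁ = { S ⊆ A : ψ(S) = φ(S) for all ψ, φ ∈ Ψ } be the collection of subsets of A on which all coverings in Ψ have the same image. Then the following are equivalent: (a) Ψ is decomposable, i.e., there is a nonempty proper E ⊆ Γ_{2ν} with ψ(E∩A) = E∩B for all ψ ∈ Ψ; (b) #𝒜₁ ≥ 3; (c) #𝒜₁ ≥ 4. -/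
open MvPolynomial Finset

noncomputable section

/-- The algebra `𝒜₁` of subsets of the sublattice `A` (encoded as subsets `T` of
`Fin ν`) on which all coverings in `Ψ` have the same image. -/
def sameImageSets (ν : ℕ) (Ψ : Finset (Equiv.Perm (Fin ν))) : Finset (Finset (Fin ν)) :=
  Finset.univ.filter (fun T : Finset (Fin ν) =>
    ∀ σ ∈ Ψ, ∀ φ ∈ Ψ, T.image (fun t => σ t) = T.image (fun t => φ t))

lemma siteA_inj_s10 (ν : ℕ) : Function.Injective (siteA ν) := by
  intro a b h
  simp only [siteA, Fin.mk.injEq] at h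
  exact Fin.ext (by omega)

lemma siteB_inj_s10 (ν : ℕ) : Function.Injective (siteB ν) := by
  intro a b h
  simp only [siteB, Fin.mk.injEq] at h
  exact Fin.ext (by omega)

lemma mem_sameImageSets {ν : ℕ} {Ψ : Finset (Equiv.Perm (Fin ν))} {T : Finset (Fin ν)} :
    T ∈ sameImageSets ν Ψ ↔
      ∀ σ ∈ Ψ, ∀ φ ∈ Ψ, T.image (fun t => σ t) = T.image (fun t => φ t) := by
  simp [sameImageSets]

lemma image_compl_perm {ν : ℕ} (σ : Equiv.Perm (Fin ν)) (T : Finset (Fin ν)) :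
    Tᶜ.image (fun t => σ t) = (T.image (fun t => σ t))ᶜ := by
  ext b
  simp only [Finset.mem_image, Finset.mem_compl, not_exists, not_and]
  constructor
  · rintro ⟨a, ha, rfl⟩ c hc h
    exact ha (σ.injective h ▸ hc)
  · intro h
    exact ⟨σ.symm b, fun hc => h _ hc (σ.apply_symm_apply b), σ.apply_symm_apply b⟩

lemma decomp_to_four (ν : ℕ) (hν : 3 ≤ ν) (Ψ : Finset (Equiv.Perm (Fin ν)))
    (hΨ : 2 ≤ Ψ.card)
    (hE : ∃ E : Finset (Fin (2 * ν)), E.Nonempty ∧ E ≠ Finset.univ ∧ ∀ σ ∈ Ψ, MapsCut ν σ E) :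
    4 ≤ (sameImageSets ν Ψ).card := by
  obtain ⟨E, hEne, hEnu, hmaps⟩ := hE
  obtain ⟨σ₀, hσ₀⟩ := Finset.card_pos.mp (by omega : 0 < Ψ.card)
  set T : Finset (Fin ν) := Finset.univ.filter (fun t => siteA ν t ∈ E) with hT
  -- T ∈ 𝒜₁
  have hTmem : T ∈ sameImageSets ν Ψ := by
    rw [mem_sameImageSets]
    intro σ hσ φ hφ
    have h1 := hmaps σ hσ
    have h2 := hmaps φ hφ
    unfold MapsCut at h1 h2
    have : (T.image (fun t => σ t)).image (siteB ν)
        = (T.image (fun t => φ t)).image (siteB ν) := by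
      rw [Finset.image_image, Finset.image_image]
      exact h1.trans h2.symm
    exact Finset.image_injective (siteB_inj_s10 ν) this
  have hTcmem : Tᶜ ∈ sameImageSets ν Ψ := by
    rw [mem_sameImageSets]
    intro σ hσ φ hφ
    rw [image_compl_perm, image_compl_perm,
      mem_sameImageSets.mp hTmem σ hσ φ hφ]
  have hemem : (∅ : Finset (Fin ν)) ∈ sameImageSets ν Ψ := by
    rw [mem_sameImageSets]; intros; simp
  have humem : (Finset.univ : Finset (Fin ν)) ∈ sameImageSets ν Ψ := by
    rw [mem_sameImageSets]
    intro σ hσ φ hφ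
    rw [Finset.image_univ_equiv, Finset.image_univ_equiv]
  -- T is nontrivial
  have hTne : T ≠ ∅ := by
    intro h
    have h1 := hmaps σ₀ hσ₀
    unfold MapsCut at h1
    rw [← hT, h, Finset.image_empty] at h1
    obtain ⟨x, hx⟩ := hEne
    rcases Nat.even_or_odd x.val with hev | hod
    · have hx2 : x = siteA ν ⟨x.val / 2, by have := x.isLt; omega⟩ := by
        have he := Nat.even_iff.mp hev
        apply Fin.ext
        simp [siteA]
        omega
      have : (⟨x.val / 2, by have := x.isLt; omega⟩ : Fin ν) ∈ T := by
        rw [hT]; simp [← hx2, hx]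
      rw [h] at this; exact absurd this (Finset.notMem_empty _)
    · have : x ∈ E.filter (fun x => x.val % 2 = 1) := by
        simp [hx, Nat.odd_iff.mp hod]
      rw [← h1] at this; exact absurd this (Finset.notMem_empty _)
  have hTnu : T ≠ Finset.univ := by
    intro h
    apply hEnu
    have h1 := hmaps σ₀ hσ₀
    unfold MapsCut at h1
    rw [← hT, h] at h1
    ext x
    simp only [Finset.mem_univ, iff_true]
    rcases Nat.even_or_odd x.val with hev | hod
    · have hx2 : x = siteA ν ⟨x.val / 2, by have := x.isLt; omega⟩ := by
        have he := Nat.even_iff.mp hev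
        apply Fin.ext; simp [siteA]; omega
      have : (⟨x.val / 2, by have := x.isLt; omega⟩ : Fin ν) ∈ T := h ▸ Finset.mem_univ _
      rw [hT, Finset.mem_filter] at this
      rw [hx2]; exact this.2
    · have hx2 : x = siteB ν ⟨x.val / 2, by have := x.isLt; omega⟩ := by
        have ho := Nat.odd_iff.mp hod
        apply Fin.ext; simp [siteB]
        omega
      have : x ∈ E.filter (fun x => x.val % 2 = 1) := by
        rw [← h1, hx2]
        exact Finset.mem_image.mpr ⟨σ₀.symm ⟨x.val / 2, by have := x.isLt; omega⟩,
          Finset.mem_univ _, by simp⟩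
      exact (Finset.mem_filter.mp this).1
  -- the four-element set
  have hnonempty : (Finset.univ : Finset (Fin ν)).Nonempty := by
    have : 0 < ν := by omega
    exact ⟨⟨0, this⟩, Finset.mem_univ _⟩
  have h1 : (∅ : Finset (Fin ν)) ≠ Finset.univ := (hnonempty.ne_empty).symm
  have h2 : T ≠ Tᶜ := by
    intro h
    obtain ⟨t, ht⟩ := Finset.nonempty_iff_ne_empty.mpr hTne
    have := h ▸ ht
    exact (Finset.mem_compl.mp this) ht
  have h3 : (∅ : Finset (Fin ν)) ≠ Tᶜ := by
    intro h
    exact hTnu ((Finset.compl_eq_empty_iff T).mp h.symm)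
  have h4 : (Finset.univ : Finset (Fin ν)) ≠ Tᶜ := by
    intro h
    exact hTne ((Finset.compl_eq_univ_iff T).mp h.symm)
  have hsub : ({∅, Finset.univ, T, Tᶜ} : Finset (Finset (Fin ν))) ⊆ sameImageSets ν Ψ := by
    intro S hS
    simp only [Finset.mem_insert, Finset.mem_singleton] at hS
    rcases hS with rfl | rfl | rfl | rfl
    · exact hemem
    · exact humem
    · exact hTmem
    · exact hTcmem
  have hcard : ({∅, Finset.univ, T, Tᶜ} : Finset (Finset (Fin ν))).card = 4 := by
    rw [Finset.card_insert_of_notMem (by simp [h1, hTne.symm, h3]),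
      Finset.card_insert_of_notMem (by simp [hTnu.symm, h4]),
      Finset.card_insert_of_notMem (by simp [h2]),
      Finset.card_singleton]
  calc 4 = ({∅, Finset.univ, T, Tᶜ} : Finset (Finset (Fin ν))).card := hcard.symm
    _ ≤ (sameImageSets ν Ψ).card := Finset.card_le_card hsub

lemma three_to_decomp (ν : ℕ) (hν : 3 ≤ ν) (Ψ : Finset (Equiv.Perm (Fin ν)))
    (hΨ : 2 ≤ Ψ.card) (h3 : 3 ≤ (sameImageSets ν Ψ).card) :
    ∃ E : Finset (Fin (2 * ν)), E.Nonempty ∧ E ≠ Finset.univ ∧ ∀ σ ∈ Ψ, MapsCut ν σ E := by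
  obtain ⟨σ₀, hσ₀⟩ := Finset.card_pos.mp (by omega : 0 < Ψ.card)
  -- find a nontrivial T in 𝒜₁
  have : ∃ T ∈ sameImageSets ν Ψ, T ≠ ∅ ∧ T ≠ Finset.univ := by
    by_contra h
    push_neg at h
    have hsub : sameImageSets ν Ψ ⊆ {∅, Finset.univ} := by
      intro T hT
      simp only [Finset.mem_insert, Finset.mem_singleton]
      by_contra hc
      push_neg at hc
      exact hc.2 (h T hT hc.1)
    have := Finset.card_le_card hsub
    have : ({∅, Finset.univ} : Finset (Finset (Fin ν))).card ≤ 2 :=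
      Finset.card_insert_le _ _ |>.trans (by simp)
    omega
  obtain ⟨T, hTmem, hTne, hTnu⟩ := this
  set E : Finset (Fin (2 * ν)) :=
    T.image (siteA ν) ∪ (T.image (fun t => σ₀ t)).image (siteB ν) with hEdef
  have hsiteA_mem : ∀ t : Fin ν, siteA ν t ∈ E ↔ t ∈ T := by
    intro t
    rw [hEdef]
    simp only [Finset.mem_union, Finset.mem_image]
    constructor
    · rintro (⟨a, ha, hab⟩ | ⟨a, ha, hab⟩)
      · exact (siteA_inj_s10 ν hab) ▸ ha
      · exfalso
        have : (siteB ν a).val = (siteA ν t).val := by rw [hab]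
        simp [siteA, siteB] at this
        omega
    · intro ht; exact Or.inl ⟨t, ht, rfl⟩
  refine ⟨E, ?_, ?_, ?_⟩
  · obtain ⟨t, ht⟩ := Finset.nonempty_iff_ne_empty.mpr hTne
    exact ⟨siteA ν t, (hsiteA_mem t).mpr ht⟩
  · intro h
    obtain ⟨t, ht⟩ : ∃ t, t ∉ T := by
      by_contra hc
      push_neg at hc
      exact hTnu (Finset.eq_univ_iff_forall.mpr hc)
    exact ht ((hsiteA_mem t).mp (h ▸ Finset.mem_univ _))
  · intro σ hσ
    unfold MapsCut
    have hfil : Finset.univ.filter (fun t => siteA ν t ∈ E) = T := by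
      ext t; simp [hsiteA_mem t]
    rw [hfil]
    have himg : T.image (fun t => σ t) = T.image (fun t => σ₀ t) :=
      mem_sameImageSets.mp hTmem σ hσ σ₀ hσ₀
    have hL : T.image (fun t => siteB ν (σ t))
        = (T.image (fun t => σ₀ t)).image (siteB ν) := by
      rw [← himg, Finset.image_image]; rfl
    rw [hL]
    -- compute E.filter odd
    rw [hEdef, Finset.filter_union]
    have hA0 : (T.image (siteA ν)).filter (fun x => x.val % 2 = 1) = ∅ := by
      rw [Finset.filter_eq_empty_iff]
      intro x hx
      obtain ⟨a, _, rfl⟩ := Finset.mem_image.mp hx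
      simp [siteA]
    have hB1 : ((T.image (fun t => σ₀ t)).image (siteB ν)).filter (fun x => x.val % 2 = 1)
        = (T.image (fun t => σ₀ t)).image (siteB ν) := by
      rw [Finset.filter_eq_self]
      intro x hx
      obtain ⟨a, _, rfl⟩ := Finset.mem_image.mp hx
      simp [siteB]
    rw [hA0, hB1, Finset.empty_union]

/-- Theorem 3.2(i): for `ν ≥ 3` and `#Ψ ≥ 2`, the following are
equivalent: `Ψ` is decomposable (via some nonempty proper `E`); `#𝒜₁ ≥ 3`;
`#𝒜₁ ≥ 4`. -/
theorem stmt_10 (ν : ℕ) (hν : 3 ≤ ν) (Ψ : Finset (Equiv.Perm (Fin ν)))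
    (hΨ : 2 ≤ Ψ.card) :
    ((∃ E : Finset (Fin (2 * ν)), E.Nonempty ∧ E ≠ Finset.univ ∧ ∀ σ ∈ Ψ, MapsCut ν σ E)
        ↔ 3 ≤ (sameImageSets ν Ψ).card) ∧
    ((∃ E : Finset (Fin (2 * ν)), E.Nonempty ∧ E ≠ Finset.univ ∧ ∀ σ ∈ Ψ, MapsCut ν σ E)
        ↔ 4 ≤ (sameImageSets ν Ψ).card) := by
  constructor
  · constructor
    · intro h
      have := decomp_to_four ν hν Ψ hΨ h
      omega
    · exact three_to_decomp ν hν Ψ hΨ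
  · constructor
    · exact decomp_to_four ν hν Ψ hΨ
    · intro h
      exact three_to_decomp ν hν Ψ hΨ (by omega)
end
end
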